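/- Fix h > 0 and the uniform grid x_ν = νh with cells I_ν = [x_ν − h/2, x_ν + h/2) for ν ∈ ℤ. Let (v̄_ν)_{ν∈ℤ} be a real sequence with finite total variation V := Σ_{ν∈ℤ} |v̄_{ν+1} − v̄_ν| < ∞, and define the piecewise-linear minmod reconstruction P : ℝ → ℝ by P(x) = v̄_ν + mm(v̄_{ν+1} − v̄_ν, v̄_ν − v̄_{ν−1})·(x − x_ν)/h for x ∈ I_ν. Then the total (pointwise) variation of P over ℝ is at most V. That is, the minmod piecewise-linear reconstruction is Total Variation Diminishing: ‖P‖_BV ≤ Σ_ν |v̄_{ν+1} − v̄_ν|. -/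

import Mathlib

/-- The minmod function `mm(z₁,z₂) = ((sgn z₁ + sgn z₂)/2)·min(|z₁|,|z₂|)`. -/
noncomputable def minmod (z₁ z₂ : ℝ) : ℝ :=
  ((Real.sign z₁ + Real.sign z₂) / 2) * min |z₁| |z₂|

/-- The piecewise-linear minmod reconstruction on the uniform grid `x_ν = νh`,
with cells `I_ν = [x_ν − h/2, x_ν + h/2)`:  for `x ∈ I_ν` (i.e. `ν = ⌊x/h + 1/2⌋`),
`P(x) = v̄_ν + mm(Δ₊v̄_ν, Δ₋v̄_ν)·(x − x_ν)/h`. -/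
noncomputable def minmodReconstruction (h : ℝ) (v : ℤ → ℝ) (x : ℝ) : ℝ :=
  let ν : ℤ := ⌊x / h + 1 / 2⌋
  v ν + minmod (v (ν + 1) - v ν) (v ν - v (ν - 1)) * (x - ν * h) / h

/-! On each grid interval `[νh, (ν+1)h]` the reconstruction is monotone in the direction of
`Δ = v̄_{ν+1} − v̄_ν`: minmod keeps both half-cell slopes between `0` and `Δ`, so the left piece
rises by at most `Δ/2` up to the interface `νh + h/2` and the right piece starts at most `Δ/2`
below `v̄_{ν+1}`. As `P(νh) = v̄_ν`, the variation of `P` on that interval is exactly `|Δ|`, and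
every bounded interval lies in a finite union of grid intervals. -/

open Set

lemma minmod_comm (a b : ℝ) : minmod a b = minmod b a := by
  rw [minmod, minmod, add_comm, min_comm]

lemma minmod_neg (a b : ℝ) : minmod (-a) (-b) = -minmod a b := by
  simp only [minmod, Real.sign_neg, abs_neg]
  ring

lemma minmod_mem_Icc_of_nonneg_left {a : ℝ} (ha : 0 ≤ a) (b : ℝ) : minmod a b ∈ Icc 0 a := by
  rcases ha.eq_or_lt with rfl | ha
  · simp [minmod]
  have hmin : min |a| |b| ∈ Icc 0 a := ⟨by positivity, (min_le_left _ _).trans (abs_of_pos ha).le⟩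
  rw [minmod, Real.sign_of_pos ha]
  rcases Real.sign_apply_eq b with hb | hb | hb <;> rw [hb] <;>
    constructor <;> nlinarith [hmin.1, hmin.2]

lemma minmod_mem_Icc_of_nonneg_right {b : ℝ} (hb : 0 ≤ b) (a : ℝ) : minmod a b ∈ Icc 0 b :=
  minmod_comm b a ▸ minmod_mem_Icc_of_nonneg_left hb a

lemma eVariationOn_neg {α E : Type*} [LinearOrder α] [SeminormedAddCommGroup E] (f : α → E)
    (s : Set α) : eVariationOn (-f) s = eVariationOn f s := by
  simp only [eVariationOn, Pi.neg_apply, edist_neg_neg]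

lemma monotoneOn_Icc_of_eqOn_Ico_of_eqOn_Icc {α β : Type*} [LinearOrder α] [Preorder β]
    {f L R : α → β} {a b c : α} (hL : Monotone L) (hR : Monotone R) (hLR : L c ≤ R c)
    (hfL : EqOn f L (Ico a c)) (hfR : EqOn f R (Icc c b)) :
    MonotoneOn f (Icc a b) := by
  intro x hx y hy hxy
  rcases lt_or_ge y c with hyc | hcy
  · rw [hfL ⟨hx.1, hxy.trans_lt hyc⟩, hfL ⟨hy.1, hyc⟩]
    exact hL hxy
  rcases lt_or_ge x c with hxc | hcx
  · rw [hfL ⟨hx.1, hxc⟩, hfR ⟨hcy, hy.2⟩]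
    exact (hL hxc.le).trans (hLR.trans (hR hcy))
  · rw [hfR ⟨hcx, hx.2⟩, hfR ⟨hcy, hy.2⟩]
    exact hR hxy

lemma sum_range_comp_add_le_tsum {g : ℤ → ℝ} (hg : Summable g) (hg0 : ∀ ν, 0 ≤ g ν) (a : ℤ)
    (n : ℕ) : ∑ i ∈ Finset.range n, g (a + i) ≤ ∑' ν, g ν := by
  let e : ℕ ↪ ℤ := ⟨fun i => a + i, fun i j hij => by simpa using hij⟩
  calc ∑ i ∈ Finset.range n, g (a + i) = ∑ ν ∈ (Finset.range n).map e, g ν :=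
        (Finset.sum_map _ e g).symm
    _ ≤ ∑' ν, g ν := hg.sum_le_tsum _ fun ν _ => hg0 ν

lemma exists_Icc_subset_Icc_intCast_mul {h : ℝ} (hh : 0 < h) (x y : ℝ) :
    ∃ (a : ℤ) (n : ℕ), Icc x y ⊆ Icc (a * h) ((a + n : ℤ) * h) := by
  obtain ⟨N, hN⟩ := exists_nat_ge (max |x| |y| / h)
  have hNh : max |x| |y| ≤ N * h := (div_le_iff₀ hh).mp hN
  refine ⟨-N, 2 * N, Icc_subset_Icc ?_ ?_⟩
  · push_cast
    nlinarith [neg_abs_le x, le_max_left |x| |y|]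
  · push_cast
    nlinarith [le_abs_self y, le_max_right |x| |y|]

section Reconstruction

variable {h : ℝ} (v : ℤ → ℝ)

lemma minmodReconstruction_eq_of_mem_Ico (hh : 0 < h) {ν : ℤ} {x : ℝ}
    (hx : x ∈ Ico (ν * h - h / 2) (ν * h + h / 2)) :
    minmodReconstruction h v x
      = v ν + minmod (v (ν + 1) - v ν) (v ν - v (ν - 1)) * (x - ν * h) / h := by
  have hfloor : ⌊x / h + 1 / 2⌋ = ν := by
    rw [Int.floor_eq_iff]
    constructor
    · have : (ν : ℝ) - 1 / 2 ≤ x / h := (le_div_iff₀ hh).mpr (by linarith [hx.1])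
      linarith
    · have : x / h < ν + 1 / 2 := (div_lt_iff₀ hh).mpr (by linarith [hx.2])
      linarith
  simp only [minmodReconstruction, hfloor]

lemma minmodReconstruction_intCast_mul (hh : 0 < h) (ν : ℤ) :
    minmodReconstruction h v (ν * h) = v ν := by
  rw [minmodReconstruction_eq_of_mem_Ico v hh (ν := ν) ⟨by linarith, by linarith⟩]
  simp

lemma minmodReconstruction_neg : minmodReconstruction h (-v) = -minmodReconstruction h v := by
  funext x
  simp only [minmodReconstruction, Pi.neg_apply, ← neg_sub', minmod_neg]
  ring

lemma minmodReconstruction_monotoneOn_Icc (hh : 0 < h) (ν : ℤ) (hΔ : v ν ≤ v (ν + 1)) :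
    MonotoneOn (minmodReconstruction h v) (Icc (ν * h) ((ν + 1 : ℤ) * h)) := by
  have hΔ' : 0 ≤ v (ν + 1) - v (ν + 1 - 1) := by rw [add_sub_cancel_right]; linarith
  obtain ⟨hm₀, hm₀Δ⟩ := minmod_mem_Icc_of_nonneg_left (sub_nonneg.2 hΔ) (v ν - v (ν - 1))
  obtain ⟨hm₁, hm₁Δ⟩ := minmod_mem_Icc_of_nonneg_right hΔ' (v (ν + 1 + 1) - v (ν + 1))
  refine monotoneOn_Icc_of_eqOn_Ico_of_eqOn_Icc (c := ν * h + h / 2)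
    (L := fun x => v ν + minmod (v (ν + 1) - v ν) (v ν - v (ν - 1)) * (x - ν * h) / h)
    (R := fun x => v (ν + 1)
      + minmod (v (ν + 1 + 1) - v (ν + 1)) (v (ν + 1) - v (ν + 1 - 1)) * (x - (ν + 1 : ℤ) * h) / h)
    (fun x y hxy => by beta_reduce; gcongr) (fun x y hxy => by beta_reduce; gcongr) ?_
    (fun x hx => minmodReconstruction_eq_of_mem_Ico v hh ⟨by linarith [hx.1], hx.2⟩)
    (fun x hx => minmodReconstruction_eq_of_mem_Ico v hh (ν := ν + 1)
      ⟨by push_cast; linarith [hx.1], by push_cast at hx ⊢; linarith [hx.2]⟩)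
  have hL : (ν * h + h / 2 - ν * h) / h = 1 / 2 := by field_simp; ring
  have hR : (ν * h + h / 2 - (ν + 1 : ℤ) * h) / h = -(1 / 2) := by push_cast; field_simp; ring
  simp only [mul_div_assoc, hL, hR, add_sub_cancel_right] at hm₁ hm₁Δ ⊢
  linarith

lemma eVariationOn_minmodReconstruction_Icc (hh : 0 < h) (ν : ℤ) :
    eVariationOn (minmodReconstruction h v) (Icc (ν * h) ((ν + 1 : ℤ) * h))
      = ENNReal.ofReal |v (ν + 1) - v ν| := by
  wlog hΔ : v ν ≤ v (ν + 1) generalizing v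
  · have := this (-v) (by simp only [Pi.neg_apply]; linarith)
    rwa [minmodReconstruction_neg, eVariationOn_neg, Pi.neg_apply, Pi.neg_apply, neg_sub_neg,
      abs_sub_comm] at this
  have hle : (ν : ℝ) * h ≤ (ν + 1 : ℤ) * h := by push_cast; linarith
  rw [← inter_self (Icc _ _), (minmodReconstruction_monotoneOn_Icc v hh ν hΔ).eVariationOn_eq
    (left_mem_Icc.2 hle) (right_mem_Icc.2 hle), minmodReconstruction_intCast_mul v hh,
    minmodReconstruction_intCast_mul v hh, abs_of_nonneg (sub_nonneg.2 hΔ)]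

lemma eVariationOn_minmodReconstruction_Icc_add (hh : 0 < h) (a : ℤ) (n : ℕ) :
    eVariationOn (minmodReconstruction h v) (Icc (a * h) ((a + n : ℤ) * h))
      = ∑ i ∈ Finset.range n, ENNReal.ofReal |v (a + i + 1) - v (a + i)| := by
  have hI : Monotone fun i : ℕ => ((a + i : ℤ) : ℝ) * h := fun i j hij => by
    push_cast; gcongr
  have := eVariationOn.sum' (minmodReconstruction h v) hI (n := n)
  simp only [Nat.cast_zero, add_zero, Nat.cast_succ, ← add_assoc,
    eVariationOn_minmodReconstruction_Icc v hh] at this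
  exact this.symm

end Reconstruction

theorem minmodReconstruction_TVD
    (h : ℝ) (hh : 0 < h) (v : ℤ → ℝ)
    (hV : Summable fun ν : ℤ => |v (ν + 1) - v ν|) :
    eVariationOn (minmodReconstruction h v) Set.univ
      ≤ ENNReal.ofReal (∑' ν : ℤ, |v (ν + 1) - v ν|) := by
  rw [eVariationOn.eq_biSup_inter_Icc]
  refine iSup₂_le fun p _ => ?_
  obtain ⟨a, n, hsub⟩ := exists_Icc_subset_Icc_intCast_mul hh p.1 p.2
  calc eVariationOn (minmodReconstruction h v) (univ ∩ Icc p.1 p.2)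
      ≤ eVariationOn (minmodReconstruction h v) (Icc (a * h) ((a + n : ℤ) * h)) :=
        eVariationOn.mono _ (by rwa [univ_inter])
    _ = ENNReal.ofReal (∑ i ∈ Finset.range n, |v (a + i + 1) - v (a + i)|) := by
        rw [eVariationOn_minmodReconstruction_Icc_add v hh,
          ENNReal.ofReal_sum_of_nonneg fun _ _ => abs_nonneg _]
    _ ≤ ENNReal.ofReal (∑' ν : ℤ, |v (ν + 1) - v ν|) :=
        ENNReal.ofReal_le_ofReal
          (sum_range_comp_add_le_tsum hV (fun _ => abs_nonneg _) a n)
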